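/- Let f : M → ℝᵐ be an isometric immersion and 𝒯 a conformal infinitesimal bending with conformal factor ρ. Define L by LX = ∇̃_X𝒯 - ρf_*X, B(X,Y) = (∇̃_X L)Y, and β(X,Y) = (B(X,Y))_{N_fM}. Then β is a symmetric tensor, i.e., β(X,Y) = β(Y,X) for all vector fields X,Y. -/

import Mathlib

open scoped InnerProductSpace

noncomputable section

variable {n m : ℕ}

/-- Tangential projection: orthogonal projection onto the image of `dfₓ`. -/
def tangPart (f : EuclideanSpace ℝ (Fin n) → EuclideanSpace ℝ (Fin m))
    (x : EuclideanSpace ℝ (Fin n)) (v : EuclideanSpace ℝ (Fin m)) :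
    EuclideanSpace ℝ (Fin m) :=
  (Submodule.orthogonalProjectionOnto (LinearMap.range (fderiv ℝ f x : EuclideanSpace ℝ (Fin n) →ₗ[ℝ] EuclideanSpace ℝ (Fin m))) v : EuclideanSpace ℝ (Fin m))

/-- Normal component. -/
def norPart (f : EuclideanSpace ℝ (Fin n) → EuclideanSpace ℝ (Fin m))
    (x : EuclideanSpace ℝ (Fin n)) (v : EuclideanSpace ℝ (Fin m)) :
    EuclideanSpace ℝ (Fin m) :=
  v - tangPart f x v

/-- Pushforward of a vector field `X` on the chart domain: `f_* X`. -/
def pushf (f : EuclideanSpace ℝ (Fin n) → EuclideanSpace ℝ (Fin m))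
    (X : EuclideanSpace ℝ (Fin n) → EuclideanSpace ℝ (Fin n))
    (x : EuclideanSpace ℝ (Fin n)) : EuclideanSpace ℝ (Fin m) :=
  fderiv ℝ f x (X x)

/-- Second fundamental form on vector fields: normal component of `D_X (f_* Y)`. -/
def sff (f : EuclideanSpace ℝ (Fin n) → EuclideanSpace ℝ (Fin m))
    (X Y : EuclideanSpace ℝ (Fin n) → EuclideanSpace ℝ (Fin n))
    (x : EuclideanSpace ℝ (Fin n)) : EuclideanSpace ℝ (Fin m) :=
  norPart f x (fderiv ℝ (pushf f Y) x (X x))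

/-- Induced Levi-Civita connection: `f_* (∇_X Y)` is the tangential part of
`D_X (f_* Y)`; we recover `∇_X Y` using the injectivity of `dfₓ`. -/
def covDer (f : EuclideanSpace ℝ (Fin n) → EuclideanSpace ℝ (Fin m))
    (X Y : EuclideanSpace ℝ (Fin n) → EuclideanSpace ℝ (Fin n))
    (x : EuclideanSpace ℝ (Fin n)) : EuclideanSpace ℝ (Fin n) :=
  Function.invFun (fderiv ℝ f x) (tangPart f x (fderiv ℝ (pushf f Y) x (X x)))

/-- The tensor `L` of an infinitesimal bending: `L u = ∇̃_u 𝒯 - ρ f_* u` (pointwise). -/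
def Lmap (f 𝒯 : EuclideanSpace ℝ (Fin n) → EuclideanSpace ℝ (Fin m))
    (ρ : EuclideanSpace ℝ (Fin n) → ℝ)
    (x : EuclideanSpace ℝ (Fin n)) (u : EuclideanSpace ℝ (Fin n)) :
    EuclideanSpace ℝ (Fin m) :=
  fderiv ℝ 𝒯 x u - ρ x • fderiv ℝ f x u

/-- `B(X,Y) = (∇̃_X L) Y = ∇̃_X (L Y) - L (∇_X Y)`. -/
def Bmap (f 𝒯 : EuclideanSpace ℝ (Fin n) → EuclideanSpace ℝ (Fin m))
    (ρ : EuclideanSpace ℝ (Fin n) → ℝ)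
    (X Y : EuclideanSpace ℝ (Fin n) → EuclideanSpace ℝ (Fin n))
    (x : EuclideanSpace ℝ (Fin n)) : EuclideanSpace ℝ (Fin m) :=
  fderiv ℝ (fun y => Lmap f 𝒯 ρ y (Y y)) x (X x) - Lmap f 𝒯 ρ x (covDer f X Y x)

/-- Conformal infinitesimal bending condition (in a chart). -/
def IsCIB (f 𝒯 : EuclideanSpace ℝ (Fin n) → EuclideanSpace ℝ (Fin m))
    (ρ : EuclideanSpace ℝ (Fin n) → ℝ) : Prop :=
  ∀ (x : EuclideanSpace ℝ (Fin n)) (u v : EuclideanSpace ℝ (Fin n)),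
    ⟪fderiv ℝ 𝒯 x u, fderiv ℝ f x v⟫_ℝ + ⟪fderiv ℝ f x u, fderiv ℝ 𝒯 x v⟫_ℝ
      = 2 * ρ x * ⟪fderiv ℝ f x u, fderiv ℝ f x v⟫_ℝ



-- Auxiliary lemmas ----------------------------------------------------------

lemma tangPart_sub (f : EuclideanSpace ℝ (Fin n) → EuclideanSpace ℝ (Fin m))
    (x : EuclideanSpace ℝ (Fin n)) (a b : EuclideanSpace ℝ (Fin m)) :
    tangPart f x (a - b) = tangPart f x a - tangPart f x b := by
  simp [tangPart, map_sub]

lemma tangPart_mem (f : EuclideanSpace ℝ (Fin n) → EuclideanSpace ℝ (Fin m))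
    (x : EuclideanSpace ℝ (Fin n)) (v : EuclideanSpace ℝ (Fin m)) :
    tangPart f x v ∈ LinearMap.range (fderiv ℝ f x : EuclideanSpace ℝ (Fin n) →ₗ[ℝ] EuclideanSpace ℝ (Fin m)) := SetLike.coe_mem _

lemma tangPart_of_mem (f : EuclideanSpace ℝ (Fin n) → EuclideanSpace ℝ (Fin m))
    (x : EuclideanSpace ℝ (Fin n)) {v : EuclideanSpace ℝ (Fin m)}
    (hv : v ∈ LinearMap.range (fderiv ℝ f x : EuclideanSpace ℝ (Fin n) →ₗ[ℝ] EuclideanSpace ℝ (Fin m))) : tangPart f x v = v := by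
  simpa [tangPart] using congrArg Subtype.val
    (Submodule.orthogonalProjectionOnto_mem_subspace_eq_self (K := LinearMap.range (fderiv ℝ f x : EuclideanSpace ℝ (Fin n) →ₗ[ℝ] EuclideanSpace ℝ (Fin m))) ⟨v, hv⟩)

lemma norPart_of_mem (f : EuclideanSpace ℝ (Fin n) → EuclideanSpace ℝ (Fin m))
    (x : EuclideanSpace ℝ (Fin n)) {v : EuclideanSpace ℝ (Fin m)}
    (hv : v ∈ LinearMap.range (fderiv ℝ f x : EuclideanSpace ℝ (Fin n) →ₗ[ℝ] EuclideanSpace ℝ (Fin m))) : norPart f x v = 0 := by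
  simp [norPart, tangPart_of_mem f x hv]

lemma fderiv_pushf (g : EuclideanSpace ℝ (Fin n) → EuclideanSpace ℝ (Fin m))
    (Y : EuclideanSpace ℝ (Fin n) → EuclideanSpace ℝ (Fin n))
    (hg : ContDiff ℝ (⊤ : ℕ∞) g) (hY : ContDiff ℝ (⊤ : ℕ∞) Y) (x u : EuclideanSpace ℝ (Fin n)) :
    fderiv ℝ (pushf g Y) x u
      = fderiv ℝ (fderiv ℝ g) x u (Y x) + fderiv ℝ g x (fderiv ℝ Y x u) := by
  have h := fderiv_clm_apply (c := fderiv ℝ g) (u := Y)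
    ((hg.fderiv_right (m := (⊤ : ℕ∞)) (by simp)).differentiable (by simp) x) (hY.differentiable (by simp) x)
  have h2 : fderiv ℝ (pushf g Y) x = fderiv ℝ (fun y => fderiv ℝ g y (Y y)) x := rfl
  rw [h2, h]
  simp [ContinuousLinearMap.flip_apply, add_comm]

lemma pushf_contDiff (g : EuclideanSpace ℝ (Fin n) → EuclideanSpace ℝ (Fin m))
    (Y : EuclideanSpace ℝ (Fin n) → EuclideanSpace ℝ (Fin n))
    (hg : ContDiff ℝ (⊤ : ℕ∞) g) (hY : ContDiff ℝ (⊤ : ℕ∞) Y) : ContDiff ℝ (⊤ : ℕ∞) (pushf g Y) :=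
  (hg.fderiv_right (by simp)).clm_apply hY

lemma fderiv_covDer (f : EuclideanSpace ℝ (Fin n) → EuclideanSpace ℝ (Fin m))
    (X Y : EuclideanSpace ℝ (Fin n) → EuclideanSpace ℝ (Fin n))
    (x : EuclideanSpace ℝ (Fin n)) :
    fderiv ℝ f x (covDer f X Y x) = tangPart f x (fderiv ℝ (pushf f Y) x (X x)) := by
  obtain ⟨a, ha⟩ := tangPart_mem f x (fderiv ℝ (pushf f Y) x (X x))
  exact Function.invFun_eq ⟨a, ha⟩

lemma covDer_sub (f : EuclideanSpace ℝ (Fin n) → EuclideanSpace ℝ (Fin m))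
    (X Y : EuclideanSpace ℝ (Fin n) → EuclideanSpace ℝ (Fin n))
    (hf : ContDiff ℝ (⊤ : ℕ∞) f) (hX : ContDiff ℝ (⊤ : ℕ∞) X) (hY : ContDiff ℝ (⊤ : ℕ∞) Y)
    (himm : ∀ x, Function.Injective (fderiv ℝ f x)) (x : EuclideanSpace ℝ (Fin n)) :
    covDer f X Y x - covDer f Y X x
      = fderiv ℝ Y x (X x) - fderiv ℝ X x (Y x) := by
  apply himm x
  have hsym : fderiv ℝ (fderiv ℝ f) x (X x) (Y x) = fderiv ℝ (fderiv ℝ f) x (Y x) (X x) :=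
    (hf.contDiffAt.isSymmSndFDerivAt (by norm_num; show ((2:ℕ∞) : WithTop ℕ∞) ≤ ((⊤:ℕ∞) : WithTop ℕ∞); exact WithTop.coe_le_coe.mpr le_top)) _ _
  rw [map_sub, fderiv_covDer, fderiv_covDer, ← tangPart_sub,
    fderiv_pushf f Y hf hY, fderiv_pushf f X hf hX, hsym]
  have h3 : fderiv ℝ (fderiv ℝ f) x (Y x) (X x) + fderiv ℝ f x (fderiv ℝ Y x (X x)) -
      (fderiv ℝ (fderiv ℝ f) x (Y x) (X x) + fderiv ℝ f x (fderiv ℝ X x (Y x)))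
      = fderiv ℝ f x (fderiv ℝ Y x (X x) - fderiv ℝ X x (Y x)) := by
    rw [map_sub]; abel
  rw [h3, tangPart_of_mem f x (v := fderiv ℝ f x (fderiv ℝ Y x (X x) - fderiv ℝ X x (Y x))) (LinearMap.mem_range_self _ _)]

lemma Bmap_eq (f 𝒯 : EuclideanSpace ℝ (Fin n) → EuclideanSpace ℝ (Fin m))
    (ρ : EuclideanSpace ℝ (Fin n) → ℝ)
    (X Y : EuclideanSpace ℝ (Fin n) → EuclideanSpace ℝ (Fin n))
    (hf : ContDiff ℝ (⊤ : ℕ∞) f) (h𝒯 : ContDiff ℝ (⊤ : ℕ∞) 𝒯) (hρ : ContDiff ℝ (⊤ : ℕ∞) ρ)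
    (hY : ContDiff ℝ (⊤ : ℕ∞) Y) (x : EuclideanSpace ℝ (Fin n)) :
    Bmap f 𝒯 ρ X Y x
      = fderiv ℝ (fderiv ℝ 𝒯) x (X x) (Y x) + fderiv ℝ 𝒯 x (fderiv ℝ Y x (X x))
        - (fderiv ℝ ρ x (X x)) • fderiv ℝ f x (Y x)
        - ρ x • (fderiv ℝ (fderiv ℝ f) x (X x) (Y x) + fderiv ℝ f x (fderiv ℝ Y x (X x)))
        - (fderiv ℝ 𝒯 x (covDer f X Y x) - ρ x • fderiv ℝ f x (covDer f X Y x)) := by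
  have hpT : DifferentiableAt ℝ (pushf 𝒯 Y) x :=
    (pushf_contDiff 𝒯 Y h𝒯 hY).differentiable (by simp) x
  have hpf : DifferentiableAt ℝ (pushf f Y) x :=
    (pushf_contDiff f Y hf hY).differentiable (by simp) x
  have hρd : DifferentiableAt ℝ ρ x := hρ.differentiable (by simp) x
  have h1 : Bmap f 𝒯 ρ X Y x
      = fderiv ℝ (fun y => pushf 𝒯 Y y - ρ y • pushf f Y y) x (X x)
        - Lmap f 𝒯 ρ x (covDer f X Y x) := rfl
  rw [h1, fderiv_fun_sub (g := fun y => ρ y • pushf f Y y) hpT (hρd.smul hpf), fderiv_fun_smul hρd hpf]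
  simp only [ContinuousLinearMap.sub_apply, ContinuousLinearMap.add_apply,
    ContinuousLinearMap.smul_apply, ContinuousLinearMap.smulRight_apply,
    fderiv_pushf 𝒯 Y h𝒯 hY, fderiv_pushf f Y hf hY, Lmap, pushf]
  abel


/-- The normal-valued tensor `β(X,Y) = ((∇̃_X L) Y)_{N_f M}` associated to a conformal
infinitesimal bending is symmetric. -/
theorem stmt_15 (f 𝒯 : EuclideanSpace ℝ (Fin n) → EuclideanSpace ℝ (Fin m))
    (ρ : EuclideanSpace ℝ (Fin n) → ℝ)
    (hf : ContDiff ℝ (⊤ : ℕ∞) f) (h𝒯 : ContDiff ℝ (⊤ : ℕ∞) 𝒯) (hρ : ContDiff ℝ (⊤ : ℕ∞) ρ)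
    (himm : ∀ x, Function.Injective (fderiv ℝ f x))
    (hbend : IsCIB f 𝒯 ρ) :
    ∀ (X Y : EuclideanSpace ℝ (Fin n) → EuclideanSpace ℝ (Fin n)),
      ContDiff ℝ (⊤ : ℕ∞) X → ContDiff ℝ (⊤ : ℕ∞) Y →
      ∀ x, norPart f x (Bmap f 𝒯 ρ X Y x) = norPart f x (Bmap f 𝒯 ρ Y X x) := by
  intro X Y hX hY x
  have hsymT : fderiv ℝ (fderiv ℝ 𝒯) x (X x) (Y x) = fderiv ℝ (fderiv ℝ 𝒯) x (Y x) (X x) :=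
    (h𝒯.contDiffAt.isSymmSndFDerivAt (by norm_num; show ((2:ℕ∞) : WithTop ℕ∞) ≤ ((⊤:ℕ∞) : WithTop ℕ∞); exact WithTop.coe_le_coe.mpr le_top)) _ _
  have hsymf : fderiv ℝ (fderiv ℝ f) x (X x) (Y x) = fderiv ℝ (fderiv ℝ f) x (Y x) (X x) :=
    (hf.contDiffAt.isSymmSndFDerivAt (by norm_num; show ((2:ℕ∞) : WithTop ℕ∞) ≤ ((⊤:ℕ∞) : WithTop ℕ∞); exact WithTop.coe_le_coe.mpr le_top)) _ _
  have hc : covDer f X Y x = (fderiv ℝ Y x (X x) - fderiv ℝ X x (Y x)) + covDer f Y X x :=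
    eq_add_of_sub_eq (covDer_sub f X Y hf hX hY himm x)
  have hdiff : Bmap f 𝒯 ρ X Y x - Bmap f 𝒯 ρ Y X x
      = fderiv ℝ ρ x (Y x) • fderiv ℝ f x (X x)
        - fderiv ℝ ρ x (X x) • fderiv ℝ f x (Y x) := by
    rw [Bmap_eq f 𝒯 ρ X Y hf h𝒯 hρ hY x, Bmap_eq f 𝒯 ρ Y X hf h𝒯 hρ hX x, hc,
      map_add, map_sub, map_add, map_sub, hsymT, hsymf]
    module
  have hmem : Bmap f 𝒯 ρ X Y x - Bmap f 𝒯 ρ Y X x ∈ LinearMap.range (fderiv ℝ f x : EuclideanSpace ℝ (Fin n) →ₗ[ℝ] EuclideanSpace ℝ (Fin m)) := by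
    rw [hdiff]
    exact Submodule.sub_mem _
      (Submodule.smul_mem _ _ (LinearMap.mem_range_self _ _))
      (Submodule.smul_mem _ _ (LinearMap.mem_range_self _ _))
  have h0 : norPart f x (Bmap f 𝒯 ρ X Y x) - norPart f x (Bmap f 𝒯 ρ Y X x)
      = norPart f x (Bmap f 𝒯 ρ X Y x - Bmap f 𝒯 ρ Y X x) := by
    simp only [norPart, tangPart_sub]; abel
  rw [norPart_of_mem f x hmem] at h0
  exact sub_eq_zero.mp h0

end
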